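/- Let (L̄_α)_{α∈ℤ} be a family of nonzero elements of B(q) satisfying [L̄_α, L̄_β] = (β − α) L̄_{α+β} for all α, β ∈ ℤ (so that their span is a subalgebra isomorphic to the Witt algebra). If L̄_0 ∈ ℂ·L_{0,0}, then there exists a nonzero integer s₀ such that L̄_α ∈ ℂ·L_{s₀α,0} for all α ∈ ℤ. -/

import Mathlib

/-!
`ad L_{0,0}` is diagonal, multiplying `L_{β,j}` by `qβ`. Since `[L̄_0, L̄_α] = α L̄_α`, every
`L̄_α` lies in the single row `β = s₀α`, where `s₀` is read off from `L̄_1`. For `α ≠ 0`, let `i`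
and `j` be the largest second indices occurring in `L̄_α` and `L̄_{-α}`: the coefficient of
`L_{0,i+j}` in `[L̄_α, L̄_{-α}]` is the product of the two leading coefficients times
`-s₀α(i + j + 2q)`, which is nonzero unless `i + j = 0`. As `[L̄_α, L̄_{-α}] = -2α L̄_0` is a
multiple of `L_{0,0}`, this forces `i = 0`, so `L̄_α ∈ ℂ·L_{s₀α,0}`.
-/

def blockCoeff (q : ℕ) (p r : ℤ × ℕ) : ℤ := r.1 * (p.2 + q) - p.1 * (r.2 + q)

def IsBlockBasis {K B : Type*} [Field K] [LieRing B] [LieAlgebra K B] (q : ℕ)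
    (L : Module.Basis (ℤ × ℕ) K B) : Prop :=
  ∀ p r, ⁅L p, L r⁆ = (blockCoeff q p r : K) • L (p + r)

theorem Module.Basis.exists_eq_smul_of_support_repr_subset {ι R M : Type*} [Semiring R]
    [AddCommMonoid M] [Module R M] (b : Module.Basis ι R M) {x : M} {i : ι}
    (h : (b.repr x).support ⊆ {i}) : ∃ c : R, x = c • b i := by
  obtain ⟨c, hc⟩ := Finsupp.support_subset_singleton'.mp h
  refine ⟨c, b.repr.injective ?_⟩
  rw [hc, map_smul, b.repr_self, Finsupp.smul_single_one]

namespace IsBlockBasis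

variable {K B : Type*} [Field K] [LieRing B] [LieAlgebra K B] {q : ℕ}
  {L : Module.Basis (ℤ × ℕ) K B}

theorem repr_lie (hL : IsBlockBasis q L) (x y : B) (m : ℤ × ℕ) :
    L.repr ⁅x, y⁆ m = ∑ p ∈ (L.repr x).support, ∑ r ∈ (L.repr y).support,
      if p + r = m then L.repr x p * L.repr y r * blockCoeff q p r else 0 := by
  have h := LinearMap.sum_repr_mul_repr_mul L L
    (B := (LieModule.toEnd K B B : B →ₗ[K] Module.End K B)) x y
  simp only [LieHom.coe_toLinearMap, LieModule.toEnd_apply_apply] at h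
  simp only [← h, Finsupp.sum, hL _ _, map_sum, map_smul, Module.Basis.repr_self,
    Finsupp.coe_finsetSum, Finset.sum_apply, Finsupp.smul_apply, Finsupp.single_apply, smul_eq_mul]
  refine Finset.sum_congr rfl fun p _ => Finset.sum_congr rfl fun r _ => ?_
  split_ifs <;> ring

theorem repr_lie_basis_zero (hL : IsBlockBasis q L) (y : B) (m : ℤ × ℕ) :
    L.repr ⁅L (0, 0), y⁆ m = (m.1 * q : K) * L.repr y m := by
  rw [hL.repr_lie, L.repr_self, Finsupp.support_single _ one_ne_zero,
    Finset.sum_singleton, Prod.mk_zero_zero]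
  simp only [zero_add, Finsupp.single_eq_same, one_mul, Finset.sum_ite_eq']
  split_ifs with hm
  · simp [blockCoeff, mul_comm]
  · simp [Finsupp.notMem_support_iff.mp hm]

theorem fst_mul_eq_of_lie_eq_smul (hL : IsBlockBasis q L) {y : B} {μ : K}
    (h : ⁅L (0, 0), y⁆ = μ • y) {m : ℤ × ℕ} (hm : L.repr y m ≠ 0) : (m.1 * q : K) = μ := by
  have := hL.repr_lie_basis_zero y m
  rw [h, map_smul, Finsupp.smul_apply, smul_eq_mul] at this
  exact (mul_right_cancel₀ hm this).symm

theorem repr_lie_of_forall_mem_support (hL : IsBlockBasis q L) {x y : B} {a b : ℤ} {i j : ℕ}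
    (hx : ∀ p ∈ (L.repr x).support, p.1 = a ∧ p.2 ≤ i)
    (hy : ∀ r ∈ (L.repr y).support, r.1 = b ∧ r.2 ≤ j) :
    L.repr ⁅x, y⁆ (a + b, i + j) =
      L.repr x (a, i) * L.repr y (b, j) * blockCoeff q (a, i) (b, j) := by
  have key : ∀ p ∈ (L.repr x).support, ∀ r ∈ (L.repr y).support,
      p + r = (a + b, i + j) ↔ p = (a, i) ∧ r = (b, j) := by
    intro p hp r hr
    obtain ⟨hp1, hp2⟩ := hx p hp
    obtain ⟨hr1, hr2⟩ := hy r hr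
    simp only [Prod.ext_iff, Prod.fst_add, Prod.snd_add]
    omega
  rw [hL.repr_lie, Finset.sum_congr rfl fun p hp => Finset.sum_congr rfl fun r hr =>
    if_congr (key p hp r hr) rfl rfl]
  simp only [ite_and, Finset.sum_ite_eq', Finset.sum_ite_irrel, Finset.sum_const_zero]
  split_ifs with hxi hyj
  · rfl
  · rw [Finsupp.notMem_support_iff.mp hyj, mul_zero, zero_mul]
  · rw [Finsupp.notMem_support_iff.mp hxi, zero_mul, zero_mul]

theorem snd_eq_zero_of_lie_eq_smul [CharZero K] (hL : IsBlockBasis q L) {a : ℤ} (ha : a ≠ 0)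
    {x y : B} (hy : y ≠ 0) (hxa : ∀ p ∈ (L.repr x).support, p.1 = a)
    (hya : ∀ r ∈ (L.repr y).support, r.1 = -a) {c : K} (hxy : ⁅x, y⁆ = c • L (0, 0)) :
    ∀ p ∈ (L.repr x).support, p.2 = 0 := by
  rcases (L.repr x).support.eq_empty_or_nonempty with hx0 | hxne
  · simp [hx0]
  have hyne : (L.repr y).support.Nonempty := by simpa using hy
  obtain ⟨p₀, hp₀, hp₀max⟩ := Finset.exists_mem_eq_sup _ hxne Prod.snd
  obtain ⟨r₀, hr₀, hr₀max⟩ := Finset.exists_mem_eq_sup _ hyne Prod.snd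
  set i := p₀.2
  set j := r₀.2
  have hxi : L.repr x (a, i) ≠ 0 := Finsupp.mem_support_iff.mp (by rwa [← hxa p₀ hp₀])
  have hyj : L.repr y (-a, j) ≠ 0 := Finsupp.mem_support_iff.mp (by rwa [← hya r₀ hr₀])
  have hxle : ∀ p ∈ (L.repr x).support, p.2 ≤ i := fun p hp => hp₀max ▸ Finset.le_sup hp
  have htop := hL.repr_lie_of_forall_mem_support (fun p hp => ⟨hxa p hp, hxle p hp⟩)
    (fun r hr => ⟨hya r hr, hr₀max ▸ Finset.le_sup hr⟩)
  have hij : i + j = 0 := by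
    by_contra hpos
    have hcoeff : blockCoeff q (a, i) (-a, j) ≠ 0 := by
      have : blockCoeff q (a, i) (-a, j) = -(a * (i + j + 2 * q)) := by
        simp only [blockCoeff]
        ring
      rw [this, neg_ne_zero]
      exact mul_ne_zero ha (by omega)
    have hne : ((0, 0) : ℤ × ℕ) ≠ (0, i + j) := by simpa [eq_comm] using hpos
    rw [add_neg_cancel, hxy, map_smul, L.repr_self, Finsupp.smul_apply,
      Finsupp.single_eq_of_ne' hne, smul_zero] at htop
    exact mul_ne_zero (mul_ne_zero hxi hyj) (Int.cast_ne_zero.mpr hcoeff) htop.symm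
  intro p hp
  have := hxle p hp
  omega

theorem exists_support_fst_eq_mul [CharZero K] (hL : IsBlockBasis q L) {c : K} {y : ℤ → B}
    (hy : ∀ α : ℤ, ⁅c • L (0, 0), y α⁆ = (α : K) • y α) (hy1 : y 1 ≠ 0) :
    ∃ s : ℤ, s ≠ 0 ∧ ∀ α, ∀ p ∈ (L.repr (y α)).support, p.1 = s * α := by
  have hc : c ≠ 0 := by
    rintro rfl
    exact hy1 (by simpa using (hy 1).symm)
  have hrow : ∀ α, ∀ p ∈ (L.repr (y α)).support, (p.1 * q : K) = c⁻¹ * α := by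
    intro α p hp
    refine hL.fst_mul_eq_of_lie_eq_smul ?_ (Finsupp.mem_support_iff.mp hp)
    rw [mul_smul, ← hy, smul_lie, smul_smul, inv_mul_cancel₀ hc, one_smul]
  obtain ⟨m, hm⟩ := Finsupp.support_nonempty_iff.mpr (L.repr.map_ne_zero_iff.mpr hy1)
  have hm1 : (m.1 * q : K) = c⁻¹ := by simpa using hrow 1 m hm
  have hq : (q : K) ≠ 0 := right_ne_zero_of_mul (hm1 ▸ inv_ne_zero hc)
  refine ⟨m.1, fun h => inv_ne_zero hc (by simp [← hm1, h]), fun α p hp => ?_⟩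
  have : (p.1 : K) * q = (m.1 * α) * q := by rw [hrow α p hp, ← hm1]; ring
  exact_mod_cast mul_right_cancel₀ hq this

end IsBlockBasis

theorem block_witt_subalgebra_general (q : ℕ)
    {B : Type} [LieRing B] [LieAlgebra ℂ B]
    (L : Module.Basis (ℤ × ℕ) ℂ B)
    (hL : ∀ (α β : ℤ) (i j : ℕ),
      ⁅L (α, i), L (β, j)⁆ =
        (((β * ((i : ℤ) + q) - α * ((j : ℤ) + q)) : ℤ) : ℂ) • L (α + β, i + j))
    (Lbar : ℤ → B) (hne : ∀ α : ℤ, Lbar α ≠ 0)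
    (hW : ∀ α β : ℤ, ⁅Lbar α, Lbar β⁆ = ((β - α : ℤ) : ℂ) • Lbar (α + β))
    (h0 : ∃ c : ℂ, Lbar 0 = c • L (0, 0)) :
    ∃ s₀ : ℤ, s₀ ≠ 0 ∧ ∀ α : ℤ, ∃ c : ℂ, Lbar α = c • L (s₀ * α, 0) := by
  have hB : IsBlockBasis q L := fun p r => hL p.1 r.1 p.2 r.2
  obtain ⟨c, hc⟩ := h0
  obtain ⟨s₀, hs₀, hrow⟩ := hB.exists_support_fst_eq_mul
    (fun α => by simpa [hc] using hW 0 α) (hne 1)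
  refine ⟨s₀, hs₀, fun α => ?_⟩
  rcases eq_or_ne α 0 with rfl | hα
  · exact ⟨c, by simpa using hc⟩
  refine L.exists_eq_smul_of_support_repr_subset fun p hp => ?_
  have hdeg := hB.snd_eq_zero_of_lie_eq_smul (mul_ne_zero hs₀ hα) (hne (-α)) (hrow α)
    (fun r hr => by rw [hrow (-α) r hr, mul_neg]) (by rw [hW, add_neg_cancel, hc, smul_smul]) p hp
  simp [Prod.ext_iff, hrow α p hp, hdeg]

/-- Let `(L̄_α)_{α ∈ ℤ}` be a family of nonzero elements of the Block type Lie algebra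
`B(q)` satisfying the Witt relations `[L̄_α, L̄_β] = (β − α) L̄_{α+β}`.  If
`L̄_0 ∈ ℂ·L_{0,0}`, then there is a nonzero integer `s₀` with `L̄_α ∈ ℂ·L_{s₀α,0}`
for all `α`. -/
theorem block_witt_subalgebra (q : ℕ) (hq : 0 < q)
    {B : Type} [LieRing B] [LieAlgebra ℂ B]
    (L : Module.Basis (ℤ × ℕ) ℂ B)
    (hL : ∀ (α β : ℤ) (i j : ℕ),
      ⁅L (α, i), L (β, j)⁆ =
        (((β * ((i : ℤ) + q) - α * ((j : ℤ) + q)) : ℤ) : ℂ) • L (α + β, i + j))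
    (Lbar : ℤ → B) (hne : ∀ α : ℤ, Lbar α ≠ 0)
    (hW : ∀ α β : ℤ, ⁅Lbar α, Lbar β⁆ = ((β - α : ℤ) : ℂ) • Lbar (α + β))
    (h0 : ∃ c : ℂ, Lbar 0 = c • L (0, 0)) :
    ∃ s₀ : ℤ, s₀ ≠ 0 ∧ ∀ α : ℤ, ∃ c : ℂ, Lbar α = c • L (s₀ * α, 0) :=
  block_witt_subalgebra_general q L hL Lbar hne hW h0
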